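/- The sum c₁ := 2·∑_{y=1}^∞ |INF(y, t_max(y))| converges to a finite real number. -/

import Mathlib

/-- Heat kernel of the simple symmetric random walk on ℤ:
`H x t = 2^{-t} * choose t ((t+x)/2)` when `t ≥ 0`, `t ≡ x (mod 2)`, `|x| ≤ t`; else `0`. -/
noncomputable def H (x t : ℤ) : ℝ :=
  if 0 ≤ t ∧ (2 : ℤ) ∣ (t - x) ∧ |x| ≤ t then
    (2 : ℝ) ^ (-t) * (t.toNat.choose ((t + x) / 2).toNat)
  else 0

/-- Influence of a deterministic right-step compared to a random step. -/
noncomputable def INF (y t : ℤ) : ℝ :=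
  if t ≤ 0 then 0 else H (y + 1) (t - 1) - H y t

/-- `t_max y = ⌊(y² - 4)/3⌋ + 2`. -/
def tmax (y : ℤ) : ℤ := Int.fdiv (y ^ 2 - 4) 3 + 2

/-!
For `t ≥ 1` Pascal's rule gives `INF y t = -(y / t) * H y t`, and `H y t ≤ 1 / √t` because
every binomial coefficient satisfies `C(t, k)² t ≤ 4^t` (by induction on the central ones,
`C(2m, m)² (3m + 1) ≤ 16^m`). Since `y² ≤ 3 t_max(y)`, the `y`-th term is then at most
`2 y / t_max(y)^{3/2} ≤ 12 / y²`, a summable majorant.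
-/

namespace Nat

theorem centralBinom_sq_mul_le (m : ℕ) : centralBinom m ^ 2 * (3 * m + 1) ≤ 16 ^ m := by
  induction m with
  | zero => simp
  | succ m ih =>
    have hrec := succ_mul_centralBinom_succ m
    -- the ratio `cb(m+1) / cb(m) = 2(2m+1) / (m+1)` keeps the bound,
    -- as `(2m+1)²(3m+4) ≤ 4(m+1)²(3m+1)`
    have hstep : (m + 1) ^ 2 * (centralBinom (m + 1) ^ 2 * (3 * (m + 1) + 1))
        ≤ (m + 1) ^ 2 * 16 ^ (m + 1) := by
      calc (m + 1) ^ 2 * (centralBinom (m + 1) ^ 2 * (3 * (m + 1) + 1))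
          = 4 * centralBinom m ^ 2 * ((2 * m + 1) ^ 2 * (3 * m + 4)) := by
            rw [← mul_assoc, ← mul_pow, hrec]; ring
        _ ≤ 4 * centralBinom m ^ 2 * (4 * (m + 1) ^ 2 * (3 * m + 1)) := by
            gcongr 4 * _ * ?_; nlinarith
        _ = 16 * (m + 1) ^ 2 * (centralBinom m ^ 2 * (3 * m + 1)) := by ring
        _ ≤ 16 * (m + 1) ^ 2 * 16 ^ m := by gcongr
        _ = (m + 1) ^ 2 * 16 ^ (m + 1) := by ring
    exact Nat.le_of_mul_le_mul_left hstep (by positivity)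

theorem two_mul_add_one_choose_le (m k : ℕ) : (2 * m + 1).choose k ≤ 2 * centralBinom m := by
  cases k with
  | zero => simp; linarith [centralBinom_pos m]
  | succ k =>
    rw [choose_succ_succ]
    linarith [choose_le_centralBinom k m, choose_le_centralBinom (k + 1) m]

theorem choose_sq_mul_le_four_pow (n k : ℕ) : n.choose k ^ 2 * n ≤ 4 ^ n := by
  obtain ⟨m, rfl | rfl⟩ := even_or_odd' n
  · calc (2 * m).choose k ^ 2 * (2 * m) ≤ centralBinom m ^ 2 * (3 * m + 1) := by
          gcongr
          · exact choose_le_centralBinom k m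
          · omega
      _ ≤ 4 ^ (2 * m) := by rw [pow_mul]; exact centralBinom_sq_mul_le m
  · calc (2 * m + 1).choose k ^ 2 * (2 * m + 1) ≤ (2 * centralBinom m) ^ 2 * (3 * m + 1) := by
          gcongr
          · exact two_mul_add_one_choose_le m k
          · omega
      _ = 4 * (centralBinom m ^ 2 * (3 * m + 1)) := by ring
      _ ≤ 4 * 16 ^ m := Nat.mul_le_mul_left 4 (centralBinom_sq_mul_le m)
      _ = 4 ^ (2 * m + 1) := by rw [pow_succ, pow_mul]; ring

end Nat

theorem H_two_mul_sub (n k : ℕ) : H (2 * k - n) n = n.choose k / 2 ^ n := by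
  rw [H]
  split_ifs with h
  · rw [zpow_neg, zpow_natCast, show (((n : ℤ) + (2 * k - n)) / 2).toNat = k by omega,
      Int.toNat_natCast, div_eq_inv_mul]
  · rw [Nat.choose_eq_zero_of_lt (by rw [abs_le] at h; omega), Nat.cast_zero, zero_div]

theorem H_nonneg (x t : ℤ) : 0 ≤ H x t := by
  rw [H]; split_ifs <;> positivity

theorem H_sq_mul_le_one (x t : ℤ) : H x t ^ 2 * t ≤ 1 := by
  rw [H]
  split_ifs with h
  · lift t to ℕ using h.1
    rw [zpow_neg, zpow_natCast, Int.toNat_natCast, ← div_eq_inv_mul, div_pow, div_mul_eq_mul_div,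
      div_le_one (by positivity), ← pow_mul, mul_comm t, pow_mul]
    norm_num
    exact_mod_cast Nat.choose_sq_mul_le_four_pow t _
  · simp

theorem INF_eq (y t : ℤ) (ht : 0 < t) : INF y t = -(y / t) * H y t := by
  rw [INF, if_neg (by omega)]
  by_cases hsupp : 2 ∣ t - y ∧ |y| ≤ t
  · rw [abs_le] at hsupp
    obtain ⟨s, hs⟩ : ∃ s : ℕ, t = s + 1 := ⟨(t - 1).toNat, by omega⟩
    obtain ⟨j, hj, hy⟩ : ∃ j : ℕ, j ≤ s + 1 ∧ y = 2 * j - (s + 1 : ℕ) :=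
      ⟨((t + y) / 2).toNat, by omega, by omega⟩
    have hpascal : ((s.choose j : ℕ) : ℝ) * (s + 1) = (s + 1).choose j * (s + 1 - j) := by
      exact_mod_cast Nat.choose_mul_succ_eq s j
    rw [show y + 1 = 2 * j - s by omega, show t - 1 = s by omega, hy, hs,
      show (s : ℤ) + 1 = (s + 1 : ℕ) by push_cast; ring, H_two_mul_sub, H_two_mul_sub]
    field_simp
    push_cast
    linear_combination (2 * 2 ^ s) * hpascal
  · have hH : H y t = 0 := by rw [H, if_neg (by tauto)]
    have hH' : H (y + 1) (t - 1) = 0 := by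
      rw [H, if_neg]; rw [abs_le] at hsupp ⊢; omega
    rw [hH, hH', sub_zero, mul_zero]

theorem abs_INF_le (y t : ℤ) (h : y ^ 2 ≤ 3 * t) : |INF y t| ≤ 6 / (y : ℝ) ^ 2 := by
  rcases le_or_gt t 0 with ht | ht
  · rw [INF, if_pos ht, abs_zero]; positivity
  rcases eq_or_ne y 0 with rfl | hy
  · simp [INF_eq 0 t ht]
  have htR : (0 : ℝ) < t := by exact_mod_cast ht
  have h3 : (y : ℝ) ^ 2 ≤ 3 * t := by exact_mod_cast h
  have hH := H_sq_mul_le_one y t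
  have hH0 := H_nonneg y t
  -- `H y t ≤ 1 / √t` is available only in squared form, so compare squares
  have hsq : (|(y : ℝ)| ^ 3 * H y t) ^ 2 ≤ (6 * t) ^ 2 := by
    have : (|(y : ℝ)| ^ 3 * H y t) ^ 2 * t ≤ (6 * (t : ℝ)) ^ 2 * t :=
      calc (|(y : ℝ)| ^ 3 * H y t) ^ 2 * (t : ℝ) = (|(y : ℝ)| ^ 2) ^ 3 * (H y t ^ 2 * t) := by
            ring
        _ ≤ (3 * (t : ℝ)) ^ 3 * 1 := by rw [sq_abs]; gcongr
        _ ≤ (6 * (t : ℝ)) ^ 2 * t := by nlinarith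
    exact le_of_mul_le_mul_right this htR
  have hcube : |(y : ℝ)| ^ 3 * H y t ≤ 6 * t :=
    (pow_le_pow_iff_left₀ (by positivity) (by positivity) two_ne_zero).1 hsq
  rw [INF_eq y t ht, abs_mul, abs_neg, abs_div, abs_of_pos htR, abs_of_nonneg hH0,
    le_div_iff₀ (by positivity), div_mul_eq_mul_div, div_mul_eq_mul_div, div_le_iff₀ htR,
    ← sq_abs]
  linarith

theorem sq_le_three_mul_tmax (y : ℤ) : y ^ 2 ≤ 3 * tmax y := by
  rw [tmax, Int.fdiv_eq_ediv_of_nonneg _ (by norm_num)]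
  omega

theorem c1_converges :
    ∃ c : ℝ, HasSum (fun n : ℕ => 2 * |INF ((n : ℤ) + 1) (tmax ((n : ℤ) + 1))|) c := by
  have hdom : Summable fun n : ℕ => 12 / ((n : ℝ) + 1) ^ 2 := by
    refine (((summable_nat_add_iff 1).mpr
      (Real.summable_one_div_nat_pow.mpr one_lt_two)).mul_left 12).congr fun n => ?_
    push_cast; ring
  refine Summable.of_nonneg_of_le (fun n => by positivity) (fun n => ?_) hdom
  have := abs_INF_le _ _ (sq_le_three_mul_tmax ((n : ℤ) + 1))
  push_cast at this
  linarith [show 12 / ((n : ℝ) + 1) ^ 2 = 2 * (6 / ((n : ℝ) + 1) ^ 2) by ring]
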